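/- arXiv:2012.15566 — 3 statements merged into one kernel-verified Lean document; each statement's English description precedes it below -/
import Mathlib

section
/- Uniqueness of the AIL minimizer on the support: if a belief-conditional policy π* attains the minimum of the map π ↦ ∑_{(s,b)∈S×B} d(s,b)·KL(π_θ(·|s) ‖ π(·|b)) over all belief-conditional policies π : B → pmf(A), then π*(·|b) = π̂(·|b) for every b ∈ B with d(b) > 0. -/
/-! For a belief `b` with `d(b) > 0`, the objective is a sum over beliefs of
`F_b(π(·|b)) = ∑ₛ d(s,b) · KL(π_θ(·|s) ‖ π(·|b))`, and it is finite at the uniform policy, so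
changing `π*` at `b` alone shows that `π*(·|b)` minimises `F_b`. Since `π̂(·|b)` is the
`d(·|b)`-mixture of the `π_θ(·|s)`, the compensation identity
`F_b(q) = F_b(π̂(·|b)) + d(b) · KL(π̂(·|b) ‖ q)` holds, so minimality forces
`KL(π̂(·|b) ‖ π*(·|b)) = 0`, and the equality case of Gibbs' inequality gives
`π*(·|b) = π̂(·|b)`. -/

open scoped BigOperators ENNReal Classical

noncomputable section

/-- A probability mass function on a finite type. -/
def IsPmf {X : Type*} [Fintype X] (p : X → ℝ) : Prop :=
  (∀ x, 0 ≤ p x) ∧ ∑ x, p x = 1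

/-- Kullback–Leibler divergence between two pmfs on a finite type, valued in `[0, ∞]`,
with the conventions `0 * log (0 / q a) = 0` and `KL(p‖q) = ∞` whenever
`p a > 0 = q a` for some `a`. -/
def klDiv {A : Type*} [Fintype A] (p q : A → ℝ) : ℝ≥0∞ :=
  if ∀ a, q a = 0 → p a = 0 then ENNReal.ofReal (∑ a, p a * Real.log (p a / q a)) else ⊤

open Finset

section KL

variable {A : Type*} [Fintype A] {p q : A → ℝ}

def klReal (p q : A → ℝ) : ℝ := ∑ a, p a * Real.log (p a / q a)

lemma mul_log_div_eq_mul_klFun {x y : ℝ} (h : y = 0 → x = 0) :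
    x * Real.log (x / y) = y * InformationTheory.klFun (x / y) + x - y := by
  rcases eq_or_ne y 0 with rfl | hy
  · simp [h rfl]
  · rw [InformationTheory.klFun_apply]
    field_simp
    ring

lemma klReal_eq_sum_mul_klFun (hp : IsPmf p) (hq : IsPmf q) (hac : ∀ a, q a = 0 → p a = 0) :
    klReal p q = ∑ a, q a * InformationTheory.klFun (p a / q a) := by
  rw [klReal, sum_congr rfl fun a _ => mul_log_div_eq_mul_klFun (hac a), sum_sub_distrib,
    sum_add_distrib, hp.2, hq.2, add_sub_cancel_right]

lemma klReal_nonneg (hp : IsPmf p) (hq : IsPmf q) (hac : ∀ a, q a = 0 → p a = 0) :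
    0 ≤ klReal p q := by
  rw [klReal_eq_sum_mul_klFun hp hq hac]
  exact sum_nonneg fun a _ =>
    mul_nonneg (hq.1 a) (InformationTheory.klFun_nonneg (div_nonneg (hp.1 a) (hq.1 a)))

lemma eq_of_klReal_eq_zero (hp : IsPmf p) (hq : IsPmf q) (hac : ∀ a, q a = 0 → p a = 0)
    (h : klReal p q = 0) : p = q := by
  rw [klReal_eq_sum_mul_klFun hp hq hac, sum_eq_zero_iff_of_nonneg fun a _ =>
    mul_nonneg (hq.1 a) (InformationTheory.klFun_nonneg (div_nonneg (hp.1 a) (hq.1 a)))] at h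
  funext a
  rcases mul_eq_zero.1 (h a (mem_univ a)) with hqa | hkl
  · rw [hqa, hac a hqa]
  · rw [InformationTheory.klFun_eq_zero_iff (div_nonneg (hp.1 a) (hq.1 a))] at hkl
    exact (div_eq_one_iff_eq fun hqa => by simp [hqa] at hkl).1 hkl

lemma mul_klReal_nonneg {c : ℝ} (hc : 0 ≤ c) (hp : IsPmf p) (hq : IsPmf q)
    (hac : 0 < c → ∀ a, q a = 0 → p a = 0) : 0 ≤ c * klReal p q := by
  rcases hc.eq_or_lt with rfl | hc
  · simp
  · exact mul_nonneg hc.le (klReal_nonneg hp hq (hac hc))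

lemma klDiv_eq_ofReal_klReal (hac : ∀ a, q a = 0 → p a = 0) :
    klDiv p q = ENNReal.ofReal (klReal p q) :=
  if_pos hac

lemma absCont_of_klDiv_ne_top (h : klDiv p q ≠ ⊤) : ∀ a, q a = 0 → p a = 0 := by
  by_contra hac
  exact h (if_neg hac)

end KL

section Mixture

variable {S A : Type*} [Fintype S] {c : S → ℝ} {p : S → A → ℝ} {q : A → ℝ}

def mixture (c : S → ℝ) (p : S → A → ℝ) (a : A) : ℝ :=
  ∑ s, c s / (∑ t, c t) * p s a

lemma sum_mul_eq_mul_mixture (hw : ∑ s, c s ≠ 0) (a : A) :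
    ∑ s, c s * p s a = (∑ s, c s) * mixture c p a := by
  rw [mixture, mul_sum]
  congr 1 with s
  field_simp

lemma mixture_eq_zero (hc : ∀ s, 0 ≤ c s) (hac : ∀ s, 0 < c s → ∀ a, q a = 0 → p s a = 0)
    (a : A) (h : q a = 0) : mixture c p a = 0 :=
  sum_eq_zero fun s _ => by
    rcases (hc s).eq_or_lt with hcs | hcs
    · simp [← hcs]
    · simp [hac s hcs a h]

variable [Fintype A]

lemma isPmf_mixture (hc : ∀ s, 0 ≤ c s) (hw : 0 < ∑ s, c s) (hp : ∀ s, IsPmf (p s)) :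
    IsPmf (mixture c p) := by
  refine ⟨fun a => sum_nonneg fun s _ => mul_nonneg (div_nonneg (hc s) hw.le) ((hp s).1 a), ?_⟩
  simp only [mixture]
  rw [sum_comm]
  simp only [← mul_sum, (hp _).2, mul_one]
  rw [← sum_div, div_self hw.ne']

lemma eq_zero_of_mixture_eq_zero (hc : ∀ s, 0 ≤ c s) (hw : 0 < ∑ s, c s)
    (hp : ∀ s, IsPmf (p s)) {s : S} (hcs : 0 < c s) (a : A) (h : mixture c p a = 0) : p s a = 0 := by
  rw [mixture, sum_eq_zero_iff_of_nonneg fun t _ =>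
    mul_nonneg (div_nonneg (hc t) hw.le) ((hp t).1 a)] at h
  exact (mul_eq_zero.1 (h s (mem_univ s))).resolve_left (div_pos hcs hw).ne'

lemma sum_mul_klReal_eq_mixture_add (hc : ∀ s, 0 ≤ c s) (hw : 0 < ∑ s, c s) (hp : ∀ s, IsPmf (p s))
    (hac : ∀ s, 0 < c s → ∀ a, q a = 0 → p s a = 0) :
    ∑ s, c s * klReal (p s) q =
      ∑ s, c s * klReal (p s) (mixture c p) + (∑ s, c s) * klReal (mixture c p) q := by
  have hterm : ∀ s a, c s * (p s a * Real.log (p s a / q a)) =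
      c s * (p s a * Real.log (p s a / mixture c p a)) +
        c s * p s a * Real.log (mixture c p a / q a) := by
    intro s a
    rcases (hc s).eq_or_lt with hcs | hcs
    · simp [← hcs]
    rcases eq_or_ne (p s a) 0 with hpa | hpa
    · simp [hpa]
    have hqa : q a ≠ 0 := fun h => hpa (hac s hcs a h)
    have hma : mixture c p a ≠ 0 := fun h => hpa (eq_zero_of_mixture_eq_zero hc hw hp hcs a h)
    rw [Real.log_div hpa hqa, Real.log_div hpa hma, Real.log_div hma hqa]
    ring
  simp only [klReal, mul_sum, hterm, sum_add_distrib]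
  rw [sum_comm (f := fun s a => c s * p s a * Real.log (mixture c p a / q a))]
  congr 1
  refine sum_congr rfl fun a _ => ?_
  simp only [← mul_assoc, ← sum_mul, sum_mul_eq_mul_mixture hw.ne']

end Mixture

section WeightedKL

variable {S A : Type*} [Fintype S] [Fintype A] {c : S → ℝ} {p : S → A → ℝ} {q : A → ℝ}

def weightedKL (c : S → ℝ) (p : S → A → ℝ) (q : A → ℝ) : ℝ≥0∞ :=
  ∑ s, ENNReal.ofReal (c s) * klDiv (p s) q

lemma weightedKL_ne_top (hac : ∀ s, 0 < c s → ∀ a, q a = 0 → p s a = 0) :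
    weightedKL c p q ≠ ⊤ :=
  ENNReal.sum_ne_top.2 fun s _ => by
    rcases le_or_gt (c s) 0 with hcs | hcs
    · simp [ENNReal.ofReal_of_nonpos hcs]
    · rw [klDiv_eq_ofReal_klReal (hac s hcs)]
      exact ENNReal.mul_ne_top ENNReal.ofReal_ne_top ENNReal.ofReal_ne_top

lemma absCont_of_weightedKL_ne_top (h : weightedKL c p q ≠ ⊤) {s : S} (hcs : 0 < c s) :
    ∀ a, q a = 0 → p s a = 0 :=
  absCont_of_klDiv_ne_top fun htop => h <| ENNReal.sum_eq_top.2
    ⟨s, mem_univ s, by rw [htop, ENNReal.mul_top (ENNReal.ofReal_pos.2 hcs).ne']⟩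

lemma weightedKL_eq_ofReal (hc : ∀ s, 0 ≤ c s) (hp : ∀ s, IsPmf (p s)) (hq : IsPmf q)
    (hac : ∀ s, 0 < c s → ∀ a, q a = 0 → p s a = 0) :
    weightedKL c p q = ENNReal.ofReal (∑ s, c s * klReal (p s) q) := by
  rw [ENNReal.ofReal_sum_of_nonneg fun s _ => mul_klReal_nonneg (hc s) (hp s) hq (hac s)]
  refine sum_congr rfl fun s _ => ?_
  rcases (hc s).eq_or_lt with hcs | hcs
  · simp [← hcs]
  · rw [klDiv_eq_ofReal_klReal (hac s hcs), ENNReal.ofReal_mul hcs.le]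

theorem eq_mixture_of_weightedKL_le (hc : ∀ s, 0 ≤ c s) (hw : 0 < ∑ s, c s)
    (hp : ∀ s, IsPmf (p s)) (hq : IsPmf q)
    (hle : weightedKL c p q ≤ weightedKL c p (mixture c p)) : q = mixture c p := by
  have hm : IsPmf (mixture c p) := isPmf_mixture hc hw hp
  have hacm : ∀ s, 0 < c s → ∀ a, mixture c p a = 0 → p s a = 0 :=
    fun s => eq_zero_of_mixture_eq_zero hc hw hp
  have hacq : ∀ s, 0 < c s → ∀ a, q a = 0 → p s a = 0 :=
    fun s => absCont_of_weightedKL_ne_top (ne_top_of_le_ne_top (weightedKL_ne_top hacm) hle)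
  have hmq : ∀ a, q a = 0 → mixture c p a = 0 := mixture_eq_zero hc hacq
  have hnonneg : 0 ≤ ∑ s, c s * klReal (p s) (mixture c p) :=
    sum_nonneg fun s _ => mul_klReal_nonneg (hc s) (hp s) hm (hacm s)
  rw [weightedKL_eq_ofReal hc hp hq hacq, weightedKL_eq_ofReal hc hp hm hacm,
    ENNReal.ofReal_le_ofReal_iff hnonneg, sum_mul_klReal_eq_mixture_add hc hw hp hacq] at hle
  have hkl : klReal (mixture c p) q = 0 :=
    le_antisymm (nonpos_of_mul_nonpos_right (by linarith) hw) (klReal_nonneg hm hq hmq)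
  exact (eq_of_klReal_eq_zero hm hq hmq hkl).symm

end WeightedKL

lemma le_of_sum_le_sum_update {ι X : Type*} [Fintype ι] [DecidableEq ι] (F : ι → X → ℝ≥0∞)
    (x : ι → X) (i : ι) (y : X) (hfin : ∑ j, F j (x j) ≠ ⊤)
    (hle : ∑ j, F j (x j) ≤ ∑ j, F j (Function.update x i y j)) : F i (x i) ≤ F i y := by
  simp only [Function.apply_update F x i y, sum_update_of_mem (mem_univ i)] at hle
  rw [sum_eq_add_sum_sdiff_singleton_of_mem (mem_univ i)] at hle hfin
  exact (ENNReal.add_le_add_iff_right (ENNReal.add_ne_top.1 hfin).2).1 hle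

lemma isPmf_uniform {A : Type*} [Fintype A] [Nonempty A] :
    IsPmf fun _ : A => (Fintype.card A : ℝ)⁻¹ := by
  refine ⟨fun _ => by positivity, ?_⟩
  rw [sum_const, card_univ, nsmul_eq_mul, mul_inv_cancel₀ (by positivity)]

theorem ail_minimizer_unique_on_support_general
    {S B A : Type*} [Fintype S] [Fintype B] [Fintype A]
    [Nonempty A]
    (d : S × B → ℝ) (hd : IsPmf d)
    (πθ : S → A → ℝ) (hπθ : ∀ s, IsPmf (πθ s))
    (dB : B → ℝ) (hdB : ∀ b, dB b = ∑ s, d (s, b))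
    (πhat : B → A → ℝ)
    (hπhat_pos : ∀ b, 0 < dB b → ∀ a, πhat b a = ∑ s, d (s, b) / dB b * πθ s a)
    (πstar : B → A → ℝ) (hπstar : ∀ b, IsPmf (πstar b))
    (hmin : ∀ π : B → A → ℝ, (∀ b, IsPmf (π b)) →
      (∑ x : S × B, ENNReal.ofReal (d x) * klDiv (πθ x.1) (πstar x.2))
        ≤ ∑ x : S × B, ENNReal.ofReal (d x) * klDiv (πθ x.1) (π x.2)) :
    ∀ b, 0 < dB b → πstar b = πhat b := by
  intro b hb
  have hc : ∀ b s, 0 ≤ d (s, b) := fun b s => hd.1 (s, b)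
  have hw : 0 < ∑ s, d (s, b) := hdB b ▸ hb
  have hπhat : πhat b = mixture (fun s => d (s, b)) πθ :=
    funext fun a => by rw [hπhat_pos b hb a, mixture, hdB]
  set F : B → (A → ℝ) → ℝ≥0∞ := fun b q => weightedKL (fun s => d (s, b)) πθ q
  have hJ : ∀ π : B → A → ℝ,
      ∑ x : S × B, ENNReal.ofReal (d x) * klDiv (πθ x.1) (π x.2) = ∑ b, F b (π b) :=
    fun π => Fintype.sum_prod_type_right _
  have hminF : ∀ π : B → A → ℝ, (∀ b, IsPmf (π b)) → ∑ b, F b (πstar b) ≤ ∑ b, F b (π b) :=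
    fun π hπ => hJ πstar ▸ hJ π ▸ hmin π hπ
  have hfin : ∑ b, F b (πstar b) ≠ ⊤ := by
    refine ne_top_of_le_ne_top ?_ (hminF _ fun _ => isPmf_uniform)
    exact ENNReal.sum_ne_top.2 fun b _ => weightedKL_ne_top fun s _ a ha =>
      absurd ha (by positivity)
  have hupdate : ∀ b', IsPmf (Function.update πstar b (mixture (fun s => d (s, b)) πθ) b') :=
    (Function.forall_update_iff πstar fun _ q => IsPmf q).2
      ⟨isPmf_mixture (hc b) hw hπθ, fun b' _ => hπstar b'⟩
  have hloc := le_of_sum_le_sum_update F πstar b _ hfin (hminF _ hupdate)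
  rw [hπhat]
  exact eq_mixture_of_weightedKL_le (hc b) hw hπθ (hπstar b) hloc

/-- Uniqueness of the AIL minimizer on the support: any belief-conditional policy
attaining the minimum of the AIL objective agrees with the implicit policy at every
belief state of positive marginal mass. -/
theorem ail_minimizer_unique_on_support
    {S B A : Type*} [Fintype S] [Fintype B] [Fintype A]
    [Nonempty S] [Nonempty B] [Nonempty A]
    (d : S × B → ℝ) (hd : IsPmf d)
    (πθ : S → A → ℝ) (hπθ : ∀ s, IsPmf (πθ s))
    (dB : B → ℝ) (hdB : ∀ b, dB b = ∑ s, d (s, b))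
    (πhat : B → A → ℝ)
    (hπhat_pos : ∀ b, 0 < dB b → ∀ a, πhat b a = ∑ s, d (s, b) / dB b * πθ s a)
    (hπhat_zero : ∀ b, dB b = 0 → ∀ a, πhat b a = 1 / (Fintype.card A : ℝ))
    (πstar : B → A → ℝ) (hπstar : ∀ b, IsPmf (πstar b))
    (hmin : ∀ π : B → A → ℝ, (∀ b, IsPmf (π b)) →
      (∑ x : S × B, ENNReal.ofReal (d x) * klDiv (πθ x.1) (πstar x.2))
        ≤ ∑ x : S × B, ENNReal.ofReal (d x) * klDiv (πθ x.1) (π x.2)) :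
    ∀ b, 0 < dB b → πstar b = πhat b :=
  ail_minimizer_unique_on_support_general d hd πθ hπθ dB hdB πhat hπhat_pos πstar hπstar hmin
end
end

section
/- Geometric occupancy bound (quantitative core of Lemma 2): if belief-conditional policies κ₁ and κ₂ satisfy q_{κ₁}(t) = q_{κ₂}(t) for all 0 ≤ t ≤ k, then |d^{κ₁}(s,b) − d^{κ₂}(s,b)| ≤ γ^{k+1} for every (s,b) ∈ S × B. -/
open scoped BigOperators Classical

noncomputable section

/-- Time-`t` marginal pmf of the Markov chain `(s_t, b_t)` induced by initial
distribution `μ₀`, transition kernel `T`, and a policy `pol` on state–belief pairs. -/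
def traj {S B A : Type*} [Fintype S] [Fintype B] [Fintype A]
    (μ₀ : S × B → ℝ) (T : S × B → A → S × B → ℝ)
    (pol : S × B → A → ℝ) : ℕ → S × B → ℝ
  | 0 => μ₀
  | t + 1 => fun x' => ∑ x : S × B, ∑ a : A, traj μ₀ T pol t x * pol x a * T x a x'

/-- The pair policy induced by a belief-conditional policy. -/
def beliefPol {S B A : Type*} (κ : B → A → ℝ) : S × B → A → ℝ := fun x a => κ x.2 a

/-- Discounted occupancy `d^pol(s,b) = (1-γ)·∑_t γ^t·q_pol(t)(s,b)`. -/
def occ {S B A : Type*} [Fintype S] [Fintype B] [Fintype A]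
    (γ : ℝ) (μ₀ : S × B → ℝ) (T : S × B → A → S × B → ℝ)
    (pol : S × B → A → ℝ) (x : S × B) : ℝ :=
  (1 - γ) * ∑' t : ℕ, γ ^ t * traj μ₀ T pol t x

lemma traj_isPmf {S B A : Type*} [Fintype S] [Fintype B] [Fintype A]
    (μ₀ : S × B → ℝ) (hμ₀ : IsPmf μ₀)
    (T : S × B → A → S × B → ℝ) (hT : ∀ x a, IsPmf (T x a))
    (pol : S × B → A → ℝ) (hpol : ∀ x, IsPmf (pol x)) (t : ℕ) :
    IsPmf (traj μ₀ T pol t) := by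
  induction t with
  | zero => exact hμ₀
  | succ t ih =>
    constructor
    · intro x'
      apply Finset.sum_nonneg; intro x _
      apply Finset.sum_nonneg; intro a _
      exact mul_nonneg (mul_nonneg (ih.1 x) ((hpol x).1 a)) ((hT x a).1 x')
    · show ∑ x' : S × B, ∑ x : S × B, ∑ a : A, traj μ₀ T pol t x * pol x a * T x a x' = 1
      rw [Finset.sum_comm]
      have : ∀ x : S × B, ∑ x' : S × B, ∑ a : A, traj μ₀ T pol t x * pol x a * T x a x'
          = traj μ₀ T pol t x := by
        intro x
        rw [Finset.sum_comm]
        have : ∀ a : A, ∑ x' : S × B, traj μ₀ T pol t x * pol x a * T x a x'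
            = traj μ₀ T pol t x * pol x a := by
          intro a
          rw [← Finset.mul_sum, (hT x a).2, mul_one]
        rw [Finset.sum_congr rfl fun a _ => this a, ← Finset.mul_sum, (hpol x).2, mul_one]
      rw [Finset.sum_congr rfl fun x _ => this x, ih.2]

lemma traj_le_one {S B A : Type*} [Fintype S] [Fintype B] [Fintype A]
    (μ₀ : S × B → ℝ) (hμ₀ : IsPmf μ₀)
    (T : S × B → A → S × B → ℝ) (hT : ∀ x a, IsPmf (T x a))
    (pol : S × B → A → ℝ) (hpol : ∀ x, IsPmf (pol x)) (t : ℕ) (x : S × B) :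
    traj μ₀ T pol t x ≤ 1 := by
  have h := traj_isPmf μ₀ hμ₀ T hT pol hpol t
  calc traj μ₀ T pol t x ≤ ∑ y, traj μ₀ T pol t y :=
        Finset.single_le_sum (fun y _ => h.1 y) (Finset.mem_univ x)
    _ = 1 := h.2

/-- Geometric occupancy bound: if the time-`t` marginals of two belief-conditional
policies agree for all `0 ≤ t ≤ k`, then their discounted occupancies differ by at most
`γ^(k+1)` at every state–belief state pair. -/
theorem geometric_occupancy_bound
    {S B A : Type*} [Fintype S] [Fintype B] [Fintype A]
    [Nonempty S] [Nonempty B] [Nonempty A]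
    (μ₀ : S × B → ℝ) (hμ₀ : IsPmf μ₀)
    (T : S × B → A → S × B → ℝ) (hT : ∀ x a, IsPmf (T x a))
    (γ : ℝ) (hγ0 : 0 < γ) (hγ1 : γ < 1)
    (κ₁ κ₂ : B → A → ℝ) (hκ₁ : ∀ b, IsPmf (κ₁ b)) (hκ₂ : ∀ b, IsPmf (κ₂ b))
    (k : ℕ)
    (hq : ∀ t ≤ k, traj μ₀ T (beliefPol κ₁) t = traj μ₀ T (beliefPol κ₂) t) :
    ∀ x : S × B,
      |occ γ μ₀ T (beliefPol κ₁) x - occ γ μ₀ T (beliefPol κ₂) x| ≤ γ ^ (k + 1) := by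
  intro x
  have hpol₁ : ∀ y : S × B, IsPmf (beliefPol κ₁ y) := fun y => hκ₁ y.2
  have hpol₂ : ∀ y : S × B, IsPmf (beliefPol κ₂ y) := fun y => hκ₂ y.2
  set q₁ := traj μ₀ T (beliefPol κ₁) with hq₁def
  set q₂ := traj μ₀ T (beliefPol κ₂) with hq₂def
  have h1nn : ∀ t, 0 ≤ q₁ t x := fun t => (traj_isPmf μ₀ hμ₀ T hT _ hpol₁ t).1 x
  have h2nn : ∀ t, 0 ≤ q₂ t x := fun t => (traj_isPmf μ₀ hμ₀ T hT _ hpol₂ t).1 x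
  have h1le : ∀ t, q₁ t x ≤ 1 := fun t => traj_le_one μ₀ hμ₀ T hT _ hpol₁ t x
  have h2le : ∀ t, q₂ t x ≤ 1 := fun t => traj_le_one μ₀ hμ₀ T hT _ hpol₂ t x
  have hγnn : (0:ℝ) ≤ γ := le_of_lt hγ0
  have hgeo : Summable fun t : ℕ => γ ^ t := summable_geometric_of_lt_one hγnn hγ1
  have hsum₁ : Summable fun t : ℕ => γ ^ t * q₁ t x := by
    apply Summable.of_nonneg_of_le (fun t => mul_nonneg (pow_nonneg hγnn t) (h1nn t))
      (fun t => ?_) hgeo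
    calc γ ^ t * q₁ t x ≤ γ ^ t * 1 :=
          mul_le_mul_of_nonneg_left (h1le t) (pow_nonneg hγnn t)
      _ = γ ^ t := mul_one _
  have hsum₂ : Summable fun t : ℕ => γ ^ t * q₂ t x := by
    apply Summable.of_nonneg_of_le (fun t => mul_nonneg (pow_nonneg hγnn t) (h2nn t))
      (fun t => ?_) hgeo
    calc γ ^ t * q₂ t x ≤ γ ^ t * 1 :=
          mul_le_mul_of_nonneg_left (h2le t) (pow_nonneg hγnn t)
      _ = γ ^ t := mul_one _
  have hocc : occ γ μ₀ T (beliefPol κ₁) x - occ γ μ₀ T (beliefPol κ₂) x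
      = (1 - γ) * ∑' t : ℕ, γ ^ t * (q₁ t x - q₂ t x) := by
    unfold occ
    rw [← mul_sub, ← Summable.tsum_sub hsum₁ hsum₂]
    congr 1
    apply tsum_congr
    intro t
    ring
  set f : ℕ → ℝ := fun t => γ ^ t * (q₁ t x - q₂ t x) with hf
  have hfsum : Summable f := by
    have := hsum₁.sub hsum₂
    simpa [hf, mul_sub] using this
  -- bound |f t|
  have hbound : ∀ t, |f t| ≤ if t ≤ k then 0 else γ ^ t := by
    intro t
    by_cases ht : t ≤ k
    · simp only [hf, ht, if_pos]
      rw [hq t ht, sub_self, mul_zero, abs_zero]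
    · simp only [hf, ht, if_neg, not_false_iff]
      rw [abs_mul, abs_pow, abs_of_nonneg hγnn]
      have : |q₁ t x - q₂ t x| ≤ 1 := by
        rw [abs_sub_le_iff]
        constructor <;> linarith [h1nn t, h2nn t, h1le t, h2le t]
      calc γ ^ t * |q₁ t x - q₂ t x| ≤ γ ^ t * 1 :=
            mul_le_mul_of_nonneg_left this (pow_nonneg hγnn t)
        _ = γ ^ t := mul_one _
  set g : ℕ → ℝ := fun t => if t ≤ k then 0 else γ ^ t with hg
  have hgsum : Summable g := by
    apply Summable.of_nonneg_of_le (fun t => ?_) (fun t => ?_) hgeo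
    · by_cases ht : t ≤ k <;> simp [hg, ht, pow_nonneg hγnn]
    · by_cases ht : t ≤ k <;> simp [hg, ht, pow_nonneg hγnn]
  have htsum_g : ∑' t, g t = γ ^ (k + 1) / (1 - γ) := by
    have hshift := (Summable.sum_add_tsum_nat_add (k + 1) hgsum).symm
    have hfin : ∑ i ∈ Finset.range (k + 1), g i = 0 := by
      apply Finset.sum_eq_zero
      intro i hi
      simp only [hg]
      rw [if_pos (Nat.lt_succ_iff.mp (Finset.mem_range.mp hi))]
    have htail : ∀ t : ℕ, g (t + (k + 1)) = γ ^ (k + 1) * γ ^ t := by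
      intro t
      simp only [hg]
      rw [if_neg (by omega), pow_add, mul_comm]
    rw [hshift, hfin, zero_add]
    rw [tsum_congr htail, tsum_mul_left, tsum_geometric_of_lt_one hγnn hγ1]
    field_simp
  rw [hocc, abs_mul, abs_of_nonneg (by linarith : (0:ℝ) ≤ 1 - γ)]
  have habs : |∑' t, f t| ≤ ∑' t, |f t| := by
    simpa [Real.norm_eq_abs] using
      norm_tsum_le_tsum_norm (f := f) (by simpa [Real.norm_eq_abs] using hfsum.abs)
  have hle : ∑' t, |f t| ≤ ∑' t, g t := Summable.tsum_le_tsum hbound hfsum.abs hgsum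
  calc (1 - γ) * |∑' t, f t| ≤ (1 - γ) * ∑' t, g t :=
        mul_le_mul_of_nonneg_left (habs.trans hle) (by linarith : (0:ℝ) ≤ 1 - γ)
    _ = γ ^ (k + 1) := by
        rw [htsum_g, mul_comm, div_mul_cancel₀ _ (by linarith : (1:ℝ) - γ ≠ 0)]
end
end

section
/- Theorem 2, optimality of the implicit policy under identifiability: let π_{θ*} be a state-conditional policy and π̂ a belief-conditional policy such that (i) ∑_{(s,b)∈S×B} d^{π̂}(s,b)·KL(π_{θ*}(·|s) ‖ π̂(·|b)) = 0 (the pair is identifiable) and (ii) J(π_{θ*}) ≥ J(κ) for every belief-conditional policy κ. Then J(π̂) = J(π_{θ*}), and π̂ is an optimal belief-conditional (partially observing) policy: J(π̂) ≥ J(κ) for every belief-conditional policy κ. -/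
open scoped BigOperators ENNReal Classical

noncomputable section

/-- The pair policy induced by a state-conditional policy. -/
def statePol {S B A : Type*} (π : S → A → ℝ) : S × B → A → ℝ := fun x a => π x.1 a

/-- Expected discounted return `J(pol) = ∑_t γ^t·E[r((s_t,b_t),a_t,(s_{t+1},b_{t+1}))]`. -/
def ret {S B A : Type*} [Fintype S] [Fintype B] [Fintype A]
    (γ : ℝ) (μ₀ : S × B → ℝ) (T : S × B → A → S × B → ℝ)
    (pol : S × B → A → ℝ) (r : S × B → A → S × B → ℝ) : ℝ :=
  ∑' t : ℕ, γ ^ t * ∑ x : S × B, ∑ a : A, ∑ x' : S × B,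
    traj μ₀ T pol t x * pol x a * T x a x' * r x a x'


/-- Gibbs' inequality equality case: if the (finite) KL divergence of two pmfs
vanishes, the pmfs are equal. -/
lemma IsPmf.eq_of_klDiv_eq_zero {A : Type*} [Fintype A] {p q : A → ℝ}
    (hp : IsPmf p) (hq : IsPmf q) (h : klDiv p q = 0) : p = q := by
  classical
  unfold klDiv at h
  split_ifs at h with hcond
  swap
  · simp at h
  rw [ENNReal.ofReal_eq_zero] at h
  have key : ∀ a, p a - q a ≤ p a * Real.log (p a / q a) := by
    intro a
    rcases eq_or_lt_of_le (hp.1 a) with h0 | h0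
    · have : p a = 0 := h0.symm
      rw [this]
      simpa using hq.1 a
    · have hqa : 0 < q a := by
        rcases eq_or_lt_of_le (hq.1 a) with h1 | h1
        · exact absurd (hcond a h1.symm) (ne_of_gt h0)
        · exact h1
      have hlog := Real.log_le_sub_one_of_pos (x := q a / p a) (by positivity)
      have hld : Real.log (q a / p a) = Real.log (q a) - Real.log (p a) :=
        Real.log_div hqa.ne' h0.ne'
      have hld2 : Real.log (p a / q a) = Real.log (p a) - Real.log (q a) :=
        Real.log_div h0.ne' hqa.ne'
      have hc : q a / p a * p a = q a := div_mul_cancel₀ _ h0.ne'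
      nlinarith [hlog, h0, hc, hld, hld2]
  have hsum0 : ∑ a, (p a - q a) = 0 := by
    rw [Finset.sum_sub_distrib, hp.2, hq.2]; ring
  have hle : ∑ a, (p a - q a) ≤ ∑ a, p a * Real.log (p a / q a) :=
    Finset.sum_le_sum fun a _ => key a
  have hptw : ∀ a ∈ Finset.univ, p a - q a = p a * Real.log (p a / q a) :=
    (Finset.sum_eq_sum_iff_of_le (fun a _ => key a)).mp
      (le_antisymm hle (h.trans (le_of_eq hsum0.symm)))
  funext a
  have ha := (hptw a (Finset.mem_univ a)).symm
  rcases eq_or_lt_of_le (hp.1 a) with h0 | h0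
  · have hp0 : p a = 0 := h0.symm
    rw [hp0] at ha; simp at ha
    rw [hp0, ha]
  · have hqa : 0 < q a := by
      rcases eq_or_lt_of_le (hq.1 a) with h1 | h1
      · exact absurd (hcond a h1.symm) (ne_of_gt h0)
      · exact h1
    by_contra hne
    have hne' : q a / p a ≠ 1 := by
      intro he
      exact hne ((div_eq_one_iff_eq h0.ne').mp he).symm
    have hlog := Real.log_lt_sub_one_of_pos (x := q a / p a) (by positivity) hne'
    have hld : Real.log (q a / p a) = Real.log (q a) - Real.log (p a) :=
      Real.log_div hqa.ne' h0.ne'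
    have hld2 : Real.log (p a / q a) = Real.log (p a) - Real.log (q a) :=
      Real.log_div h0.ne' hqa.ne'
    have hc : q a / p a * p a = q a := div_mul_cancel₀ _ h0.ne'
    nlinarith [hlog, h0, hc, hld, hld2, ha]

/-- Theorem 2 (optimality of the implicit policy under identifiability): if the pair
`{π_{θ*}, π̂}` is identifiable and `π_{θ*}` attains at least the return of every
belief-conditional policy, then `J(π̂) = J(π_{θ*})` and `π̂` is an optimal
belief-conditional policy. -/
theorem implicit_policy_optimal_under_identifiability
    {S B A : Type*} [Fintype S] [Fintype B] [Fintype A]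
    [Nonempty S] [Nonempty B] [Nonempty A]
    (μ₀ : S × B → ℝ) (hμ₀ : IsPmf μ₀)
    (T : S × B → A → S × B → ℝ) (hT : ∀ x a, IsPmf (T x a))
    (γ : ℝ) (hγ0 : 0 < γ) (hγ1 : γ < 1)
    (r : S × B → A → S × B → ℝ)
    (πθ : S → A → ℝ) (hπθ : ∀ s, IsPmf (πθ s))
    (πhat : B → A → ℝ) (hπhat : ∀ b, IsPmf (πhat b))
    (hid : ∑ x : S × B,
        ENNReal.ofReal (occ γ μ₀ T (beliefPol πhat) x) * klDiv (πθ x.1) (πhat x.2) = 0)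
    (hopt : ∀ κ : B → A → ℝ, (∀ b, IsPmf (κ b)) →
        ret γ μ₀ T (beliefPol κ) r ≤ ret γ μ₀ T (statePol πθ) r) :
    ret γ μ₀ T (beliefPol πhat) r = ret γ μ₀ T (statePol πθ) r ∧
    ∀ κ : B → A → ℝ, (∀ b, IsPmf (κ b)) →
      ret γ μ₀ T (beliefPol κ) r ≤ ret γ μ₀ T (beliefPol πhat) r := by
  classical
  set P1 := beliefPol (S := S) πhat with hP1
  set P2 := statePol (B := B) πθ with hP2
  -- basic properties of the trajectory under P1
  have hP1nn : ∀ x a, 0 ≤ P1 x a := fun x a => (hπhat x.2).1 a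
  have hP1sum : ∀ x : S × B, ∑ a, P1 x a = 1 := fun x => (hπhat x.2).2
  have htraj : ∀ t, (∀ x, 0 ≤ traj μ₀ T P1 t x) ∧ (∑ x, traj μ₀ T P1 t x = 1) := by
    intro t
    induction t with
    | zero => exact ⟨hμ₀.1, hμ₀.2⟩
    | succ t ih =>
      constructor
      · intro x'
        apply Finset.sum_nonneg; intro x _
        apply Finset.sum_nonneg; intro a _
        have := (hT x a).1 x'
        have := ih.1 x
        have := hP1nn x a
        positivity
      · simp only [traj]
        rw [Finset.sum_comm]
        have : ∀ x : S × B, ∑ x' : S × B, ∑ a : A, traj μ₀ T P1 t x * P1 x a * T x a x'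
            = traj μ₀ T P1 t x := by
          intro x
          rw [Finset.sum_comm]
          have : ∀ a : A, ∑ x' : S × B, traj μ₀ T P1 t x * P1 x a * T x a x'
              = traj μ₀ T P1 t x * P1 x a := by
            intro a
            rw [← Finset.mul_sum, (hT x a).2, mul_one]
          rw [Finset.sum_congr rfl fun a _ => this a, ← Finset.mul_sum, hP1sum, mul_one]
        calc ∑ x : S × B, ∑ x' : S × B, ∑ a : A, traj μ₀ T P1 t x * P1 x a * T x a x'
            = ∑ x : S × B, traj μ₀ T P1 t x := Finset.sum_congr rfl fun x _ => this x
          _ = 1 := ih.2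
  have htraj_le_one : ∀ t x, traj μ₀ T P1 t x ≤ 1 := by
    intro t x
    have := Finset.single_le_sum (f := traj μ₀ T P1 t) (fun y _ => (htraj t).1 y)
      (Finset.mem_univ x)
    rw [(htraj t).2] at this
    exact this
  have hsummable : ∀ x : S × B, Summable (fun t : ℕ => γ ^ t * traj μ₀ T P1 t x) := by
    intro x
    apply Summable.of_nonneg_of_le
      (fun t => by have := (htraj t).1 x; positivity)
      (fun t => by
        have h1 := htraj_le_one t x
        have h2 : (0:ℝ) ≤ γ ^ t := by positivity
        calc γ ^ t * traj μ₀ T P1 t x ≤ γ ^ t * 1 := by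
              exact mul_le_mul_of_nonneg_left h1 h2
          _ = γ ^ t := mul_one _)
    exact summable_geometric_of_lt_one hγ0.le hγ1
  -- positivity of the occupancy at reachable points
  have hocc_nonneg : ∀ x, 0 ≤ occ γ μ₀ T P1 x := by
    intro x
    unfold occ
    apply mul_nonneg (by linarith)
    exact tsum_nonneg fun t => by have := (htraj t).1 x; positivity
  have hocc_pos : ∀ x t, 0 < traj μ₀ T P1 t x → 0 < occ γ μ₀ T P1 x := by
    intro x t ht
    unfold occ
    apply mul_pos (by linarith)
    have hle : γ ^ t * traj μ₀ T P1 t x ≤ ∑' k : ℕ, γ ^ k * traj μ₀ T P1 k x :=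
      Summable.le_tsum (hsummable x) t (fun k _ => by have := (htraj k).1 x; positivity)
    have : 0 < γ ^ t * traj μ₀ T P1 t x := by positivity
    linarith
  -- from identifiability: policies agree wherever the occupancy is positive
  have hagree : ∀ x : S × B, 0 < occ γ μ₀ T P1 x → πθ x.1 = πhat x.2 := by
    intro x hx
    have hterm := (Finset.sum_eq_zero_iff.mp hid) x (Finset.mem_univ x)
    rcases mul_eq_zero.mp hterm with h | h
    · rw [ENNReal.ofReal_eq_zero] at h
      linarith
    · exact IsPmf.eq_of_klDiv_eq_zero (hπθ x.1) (hπhat x.2) h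
  -- equal one-step behaviour on the support
  have hpol : ∀ t x a, traj μ₀ T P1 t x ≠ 0 → P1 x a = P2 x a := by
    intro t x a hx
    have hpos : 0 < traj μ₀ T P1 t x := lt_of_le_of_ne ((htraj t).1 x) (Ne.symm hx)
    have := hagree x (hocc_pos x t hpos)
    simp [hP1, hP2, beliefPol, statePol, this]
  -- trajectories coincide
  have htraj_eq : ∀ t, traj μ₀ T P2 t = traj μ₀ T P1 t := by
    intro t
    induction t with
    | zero => rfl
    | succ t ih =>
      funext x'
      simp only [traj]
      refine Finset.sum_congr rfl fun x _ => Finset.sum_congr rfl fun a _ => ?_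
      rw [ih]
      by_cases hx : traj μ₀ T P1 t x = 0
      · rw [hx]; ring
      · rw [hpol t x a hx]
  -- returns coincide
  have hret : ret γ μ₀ T P1 r = ret γ μ₀ T P2 r := by
    unfold ret
    apply tsum_congr
    intro t
    congr 1
    refine Finset.sum_congr rfl fun x _ => Finset.sum_congr rfl fun a _ =>
      Finset.sum_congr rfl fun x' _ => ?_
    rw [htraj_eq t]
    by_cases hx : traj μ₀ T P1 t x = 0
    · rw [hx]; ring
    · rw [hpol t x a hx]
  refine ⟨hret, fun κ hκ => ?_⟩
  exact (hopt κ hκ).trans_eq hret.symm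
end
end
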